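/- Corollary 3: For every n-player mining game (m₁,…,mₙ) (with each mᵢ ∈ (0,1/2) and ∑ mᵢ = 1), there exists a pure Nash equilibrium strategy profile in which the set Q of pools playing Insightful has cardinality at most two. -/

import Mathlib

/-- `f(y) := y²·(2−3y)/(1−2y)`. -/
noncomputable def f (y : ℝ) : ℝ := y^2 * (2 - 3*y) / (1 - 2*y)

/-- `g(y) := (−y³ + 2y² + y − 1)/(2y² + 4y − 3)`. -/
noncomputable def g (y : ℝ) : ℝ := (-y^3 + 2*y^2 + y - 1) / (2*y^2 + 4*y - 3)

/-- `S(Q) := ∑_{j∈Q} m_j(1−m_j)`. -/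
noncomputable def S {n : ℕ} (m : Fin n → ℝ) (Q : Finset (Fin n)) : ℝ :=
  ∑ j ∈ Q, m j * (1 - m j)

/-- Expected reward of pool `i` when the set of insightful pools is `Q`. -/
noncomputable def ER {n : ℕ} (m : Fin n → ℝ) (Q : Finset (Fin n)) (i : Fin n) : ℝ :=
  if i ∈ Q then f (m i) + 2 * m i * S m Q else m i + 2 * m i * S m Q

/-- Relative revenue (utility) of pool `i`. -/
noncomputable def RREV {n : ℕ} (m : Fin n → ℝ) (Q : Finset (Fin n)) (i : Fin n) : ℝ :=
  ER m Q i / ∑ j, ER m Q j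

/-- The profile obtained from `Q` when pool `i` unilaterally switches its strategy. -/
def switch {n : ℕ} (i : Fin n) (Q : Finset (Fin n)) : Finset (Fin n) :=
  if i ∈ Q then Q.erase i else insert i Q

/-- `Q` is a pure Nash equilibrium: no pool can strictly increase its relative
revenue by unilaterally switching its own strategy. -/
def IsNash {n : ℕ} (m : Fin n → ℝ) (Q : Finset (Fin n)) : Prop :=
  ∀ i : Fin n, RREV m (switch i Q) i ≤ RREV m Q i

/- ------------------ auxiliary lemmas ------------------ -/

lemma f_pos {y : ℝ} (h0 : 0 < y) (h2 : y < 1/2) : 0 < f y := by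
  rw [f]
  apply div_pos
  · nlinarith
  · linarith

lemma S_nonneg {n : ℕ} (m : Fin n → ℝ) (hpos : ∀ i, 0 < m i) (hhalf : ∀ i, m i < 1/2)
    (Q : Finset (Fin n)) : 0 ≤ S m Q := by
  apply Finset.sum_nonneg
  intro j _
  have h1 := hpos j; have h2 := hhalf j
  nlinarith

lemma ER_pos {n : ℕ} (m : Fin n → ℝ) (hpos : ∀ i, 0 < m i) (hhalf : ∀ i, m i < 1/2)
    (Q : Finset (Fin n)) (i : Fin n) : 0 < ER m Q i := by
  have hS := S_nonneg m hpos hhalf Q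
  have h1 := hpos i; have h2 := hhalf i
  rw [ER]
  split
  · have := f_pos h1 h2; nlinarith
  · nlinarith

lemma T_pos {n : ℕ} (m : Fin n → ℝ) (hpos : ∀ i, 0 < m i) (hhalf : ∀ i, m i < 1/2)
    (i0 : Fin n) (Q : Finset (Fin n)) : 0 < ∑ j, ER m Q j :=
  Finset.sum_pos (fun j _ => ER_pos m hpos hhalf Q j) ⟨i0, Finset.mem_univ i0⟩

lemma S_insert {n : ℕ} (m : Fin n → ℝ) {i : Fin n} {Q : Finset (Fin n)} (hi : i ∉ Q) :
    S m (insert i Q) = S m Q + m i * (1 - m i) := by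
  rw [S, S, Finset.sum_insert hi]; ring

lemma sum_ER_insert {n : ℕ} (m : Fin n → ℝ) (hsum : ∑ i, m i = 1)
    {i : Fin n} {Q : Finset (Fin n)} (hi : i ∉ Q) :
    ∑ j, ER m (insert i Q) j
      = (∑ j, ER m Q j) + (f (m i) - m i) + 2 * (m i * (1 - m i)) := by
  have hS := S_insert m hi
  have hstep : ∀ j : Fin n, ER m (insert i Q) j
      = ER m Q j + 2 * m j * (m i * (1 - m i)) + (if j = i then f (m i) - m i else 0) := by
    intro j
    rcases eq_or_ne j i with rfl | hj
    · rw [ER, ER, if_pos (Finset.mem_insert_self j Q), if_neg hi, hS, if_pos rfl]; ring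
    · rw [ER, ER, hS, if_neg hj]
      by_cases hjQ : j ∈ Q
      · rw [if_pos (Finset.mem_insert_of_mem hjQ), if_pos hjQ]; ring
      · rw [if_neg (by simp [hj, hjQ]), if_neg hjQ]; ring
  rw [Finset.sum_congr rfl (fun j _ => hstep j), Finset.sum_add_distrib,
    Finset.sum_add_distrib]
  have h1 : ∑ j : Fin n, 2 * m j * (m i * (1 - m i))
      = (∑ j, m j) * (2 * (m i * (1 - m i))) := by
    rw [Finset.sum_mul]
    exact Finset.sum_congr rfl (fun j _ => by ring)
  have h2 : (∑ j : Fin n, if j = i then f (m i) - m i else 0) = f (m i) - m i := by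
    rw [Finset.sum_ite_eq' Finset.univ i (fun _ => f (m i) - m i),
      if_pos (Finset.mem_univ i)]
  rw [h1, h2, hsum]; ring

lemma key_id (x S0 T0 : ℝ) (hx : 1 - 2*x ≠ 0) :
    (x + 2*x*S0) * (T0 + (f x - x) + 2*(x*(1-x))) - (f x + 2*x*(S0 + x*(1-x))) * T0
      = (x*(1-x)^2/(1-2*x)) * (x*(1+2*S0) - (4*x-1)*T0) := by
  rw [f]; have hx' : 1 - x * 2 ≠ 0 := by rwa [mul_comm]
  field_simp; ring

lemma cmp_le {n : ℕ} (m : Fin n → ℝ) (hpos : ∀ i, 0 < m i) (hhalf : ∀ i, m i < 1/2)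
    (hsum : ∑ i, m i = 1) {i : Fin n} {Q : Finset (Fin n)} (hi : i ∉ Q)
    (hcond : (4*m i - 1) * (∑ j, ER m Q j) ≤ m i * (1 + 2 * S m Q)) :
    RREV m (insert i Q) i ≤ RREV m Q i := by
  have hT0 : 0 < ∑ j, ER m Q j := T_pos m hpos hhalf i Q
  have hT1 : 0 < ∑ j, ER m (insert i Q) j := T_pos m hpos hhalf i _
  rw [RREV, RREV, div_le_div_iff₀ hT1 hT0]
  have e1 : ER m (insert i Q) i = f (m i) + 2 * m i * (S m Q + m i * (1 - m i)) := by
    rw [ER, if_pos (Finset.mem_insert_self i Q), S_insert m hi]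
  have e2 : ER m Q i = m i + 2 * m i * S m Q := by rw [ER, if_neg hi]
  rw [e1, e2, sum_ER_insert m hsum hi]
  have hx2 : (0:ℝ) < 1 - 2 * m i := by have := hhalf i; linarith
  have hkey := key_id (m i) (S m Q) (∑ j, ER m Q j) (ne_of_gt hx2)
  have hc : 0 ≤ m i * (1 - m i)^2 / (1 - 2 * m i) := by
    apply div_nonneg _ (le_of_lt hx2)
    have := hpos i
    positivity
  have hd : 0 ≤ m i * (1 + 2 * S m Q) - (4 * m i - 1) * (∑ j, ER m Q j) := by linarith
  have := mul_nonneg hc hd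
  nlinarith [this, hkey]

lemma cmp_ge {n : ℕ} (m : Fin n → ℝ) (hpos : ∀ i, 0 < m i) (hhalf : ∀ i, m i < 1/2)
    (hsum : ∑ i, m i = 1) {i : Fin n} {Q : Finset (Fin n)} (hi : i ∉ Q)
    (hcond : m i * (1 + 2 * S m Q) ≤ (4*m i - 1) * (∑ j, ER m Q j)) :
    RREV m Q i ≤ RREV m (insert i Q) i := by
  have hT0 : 0 < ∑ j, ER m Q j := T_pos m hpos hhalf i Q
  have hT1 : 0 < ∑ j, ER m (insert i Q) j := T_pos m hpos hhalf i _
  rw [RREV, RREV, div_le_div_iff₀ hT0 hT1]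
  have e1 : ER m (insert i Q) i = f (m i) + 2 * m i * (S m Q + m i * (1 - m i)) := by
    rw [ER, if_pos (Finset.mem_insert_self i Q), S_insert m hi]
  have e2 : ER m Q i = m i + 2 * m i * S m Q := by rw [ER, if_neg hi]
  rw [e1, e2, sum_ER_insert m hsum hi]
  have hx2 : (0:ℝ) < 1 - 2 * m i := by have := hhalf i; linarith
  have hkey := key_id (m i) (S m Q) (∑ j, ER m Q j) (ne_of_gt hx2)
  have hc : 0 ≤ m i * (1 - m i)^2 / (1 - 2 * m i) := by
    apply div_nonneg _ (le_of_lt hx2)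
    have := hpos i
    positivity
  have hd : 0 ≤ (4 * m i - 1) * (∑ j, ER m Q j) - m i * (1 + 2 * S m Q) := by linarith
  have := mul_nonneg hc hd
  nlinarith [this, hkey]

set_option maxHeartbeats 1000000 in
/-- Corollary 3: every mining game has a pure Nash equilibrium with at most two
insightful pools. -/
theorem exists_pure_nash_card_le_two (n : ℕ) (hn : 2 ≤ n) (m : Fin n → ℝ)
    (hpos : ∀ i, 0 < m i) (hhalf : ∀ i, m i < 1/2)
    (hsum : ∑ i, m i = 1) :
    ∃ Q : Finset (Fin n), Q.card ≤ 2 ∧ IsNash m Q := by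
  have hne : (Finset.univ : Finset (Fin n)).Nonempty :=
    ⟨⟨0, by omega⟩, Finset.mem_univ _⟩
  obtain ⟨i₁, -, hmax⟩ := Finset.exists_max_image Finset.univ m hne
  have hSempty : S m (∅ : Finset (Fin n)) = 0 := by simp [S]
  have hTempty : ∑ j, ER m (∅ : Finset (Fin n)) j = 1 := by
    have h : ∀ j : Fin n, ER m (∅ : Finset (Fin n)) j = m j := by
      intro j
      rw [ER, if_neg (Finset.notMem_empty j), hSempty]; ring
    rw [Finset.sum_congr rfl (fun j _ => h j), hsum]
  by_cases hA : m i₁ ≤ 1/3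
  · -- Q = ∅ is a Nash equilibrium
    refine ⟨∅, by simp, ?_⟩
    intro i
    have hsw : switch i (∅ : Finset (Fin n)) = insert i ∅ := by
      rw [switch, if_neg (Finset.notMem_empty i)]
    rw [hsw]
    apply cmp_le m hpos hhalf hsum (Finset.notMem_empty i)
    rw [hTempty, hSempty]
    have h1 := hmax i (Finset.mem_univ i)
    linarith
  · push_neg at hA
    -- i₂ : the largest pool other than i₁
    have hcard : (Finset.univ.erase i₁).Nonempty := by
      rw [← Finset.card_pos, Finset.card_erase_of_mem (Finset.mem_univ i₁),
        Finset.card_univ, Fintype.card_fin]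
      omega
    obtain ⟨i₂, hi₂mem, hmax₂⟩ := Finset.exists_max_image _ m hcard
    have hne21 : i₂ ≠ i₁ := Finset.ne_of_mem_erase hi₂mem
    have hi₂max : ∀ i, i ≠ i₁ → m i ≤ m i₂ := fun i hi =>
      hmax₂ i (Finset.mem_erase.2 ⟨hi, Finset.mem_univ i⟩)
    have hba : m i₂ ≤ m i₁ := hmax i₂ (Finset.mem_univ i₂)
    have hi₂s : i₂ ∉ ({i₁} : Finset (Fin n)) := Finset.notMem_singleton.2 hne21
    have hi₁s : i₁ ∉ ({i₂} : Finset (Fin n)) := Finset.notMem_singleton.2 hne21.symm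
    have hS1val : S m ({i₁} : Finset (Fin n)) = m i₁ * (1 - m i₁) := by
      rw [S, Finset.sum_singleton]
    have hS2val : S m ({i₂} : Finset (Fin n)) = m i₂ * (1 - m i₂) := by
      rw [S, Finset.sum_singleton]
    have hT1val : ∑ j, ER m ({i₁} : Finset (Fin n)) j
        = 1 + (f (m i₁) - m i₁) + 2 * (m i₁ * (1 - m i₁)) := by
      rw [show ({i₁} : Finset (Fin n)) = insert i₁ ∅ from rfl,
        sum_ER_insert m hsum (Finset.notMem_empty i₁), hTempty]
    have hT2val : ∑ j, ER m ({i₂} : Finset (Fin n)) j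
        = 1 + (f (m i₂) - m i₂) + 2 * (m i₂ * (1 - m i₂)) := by
      rw [show ({i₂} : Finset (Fin n)) = insert i₂ ∅ from rfl,
        sum_ER_insert m hsum (Finset.notMem_empty i₂), hTempty]
    have hu : (0:ℝ) < 1 - 2 * m i₁ := by have := hhalf i₁; linarith
    have hv : (0:ℝ) < 1 - 2 * m i₂ := by have := hhalf i₂; linarith
    have hNa : (1 + (f (m i₁) - m i₁) + 2 * (m i₁ * (1 - m i₁))) * (1 - 2 * m i₁)
        = (m i₁)^3 - 2*(m i₁)^2 - m i₁ + 1 := by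
      have hne' : 1 - 2 * m i₁ ≠ 0 := ne_of_gt hu
      rw [f]; have hx' : 1 - m i₁ * 2 ≠ 0 := by rwa [mul_comm]
      field_simp; ring
    have hNb : (1 + (f (m i₂) - m i₂) + 2 * (m i₂ * (1 - m i₂))) * (1 - 2 * m i₂)
        = (m i₂)^3 - 2*(m i₂)^2 - m i₂ + 1 := by
      have hne' : 1 - 2 * m i₂ ≠ 0 := ne_of_gt hv
      rw [f]; have hx' : 1 - m i₂ * 2 ≠ 0 := by rwa [mul_comm]
      field_simp; ring
    by_cases hB1 : (4 * m i₂ - 1) * (∑ j, ER m ({i₁} : Finset (Fin n)) j)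
        ≤ m i₂ * (1 + 2 * S m ({i₁} : Finset (Fin n)))
    · -- Q = {i₁} is a Nash equilibrium
      refine ⟨{i₁}, by simp, ?_⟩
      intro i
      by_cases hii : i = i₁
      · subst hii
        have hsw : switch i ({i} : Finset (Fin n)) = ∅ := by
          rw [switch, if_pos (Finset.mem_singleton_self i), Finset.erase_singleton]
        rw [hsw, show ({i} : Finset (Fin n)) = insert i ∅ from rfl]
        apply cmp_ge m hpos hhalf hsum (Finset.notMem_empty i)
        rw [hTempty, hSempty]
        linarith
      · have hins : i ∉ ({i₁} : Finset (Fin n)) := Finset.notMem_singleton.2 hii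
        have hsw : switch i ({i₁} : Finset (Fin n)) = insert i {i₁} := by
          rw [switch, if_neg hins]
        rw [hsw]
        apply cmp_le m hpos hhalf hsum hins
        have hxb : m i ≤ m i₂ := hi₂max i hii
        have hfa : 0 ≤ f (m i₁) := le_of_lt (f_pos (hpos i₁) (hhalf i₁))
        have hK : 0 ≤ 4 * (∑ j, ER m ({i₁} : Finset (Fin n)) j) - 1
            - 2 * S m ({i₁} : Finset (Fin n)) := by
          rw [hT1val, hS1val]
          have h1 := hpos i₁; have h2 := hhalf i₁
          nlinarith
        have h1 : m i * (4 * (∑ j, ER m ({i₁} : Finset (Fin n)) j) - 1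
              - 2 * S m ({i₁} : Finset (Fin n)))
            ≤ m i₂ * (4 * (∑ j, ER m ({i₁} : Finset (Fin n)) j) - 1
              - 2 * S m ({i₁} : Finset (Fin n))) :=
          mul_le_mul_of_nonneg_right hxb hK
        nlinarith [h1, hB1]
    · push_neg at hB1
      -- Q = {i₁, i₂} is a Nash equilibrium
      refine ⟨{i₁, i₂}, ?_, ?_⟩
      · exact (Finset.card_insert_le i₁ {i₂}).trans (by simp)
      have hB1' : m i₂ * (1 + 2 * (m i₁ * (1 - m i₁)))
          < (4 * m i₂ - 1) * (1 + (f (m i₁) - m i₁) + 2 * (m i₁ * (1 - m i₁))) := by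
        rw [hT1val, hS1val] at hB1; exact hB1
      have h2 := mul_lt_mul_of_pos_right hB1' hu
      have h3 : ((4 * m i₂ - 1) * (1 + (f (m i₁) - m i₁) + 2 * (m i₁ * (1 - m i₁))))
            * (1 - 2 * m i₁)
          = (4 * m i₂ - 1) * ((m i₁)^3 - 2*(m i₁)^2 - m i₁ + 1) := by
        linear_combination (4 * m i₂ - 1) * hNa
      rw [h3] at h2
      -- polynomial form of the hypothesis ¬B1
      have hb' : (m i₁)^3 - 2*(m i₁)^2 - m i₁ + 1
          < m i₂ * (3 - 4 * m i₁ - 2 * (m i₁)^2) := by nlinarith [h2]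
      intro i
      by_cases hii1 : i = i₁
      · subst hii1
        have hsw : switch i ({i, i₂} : Finset (Fin n)) = {i₂} := by
          rw [switch, if_pos (Finset.mem_insert_self i {i₂})]
          exact Finset.erase_insert hi₁s
        rw [hsw, show ({i, i₂} : Finset (Fin n)) = insert i {i₂} from rfl]
        apply cmp_ge m hpos hhalf hsum hi₁s
        rw [hT2val, hS2val]
        -- need: a(1+2b(1−b)) ≤ (4a−1)·Tb
        have h4 : ((4 * m i - 1) * (1 + (f (m i₂) - m i₂) + 2 * (m i₂ * (1 - m i₂))))
              * (1 - 2 * m i₂)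
            = (4 * m i - 1) * ((m i₂)^3 - 2*(m i₂)^2 - m i₂ + 1) := by
          linear_combination (4 * m i - 1) * hNb
        have hbr : 0 ≤ (m i - m i₂) * (2 + (m i)^2 + 3*(m i)*(m i₂) + (m i₂)^2
            - 2*(m i) - 2*(m i₂)) := by
          apply mul_nonneg (by linarith)
          have h1 := hpos i; have h5 := hpos i₂
          have h6 := hhalf i; have h7 := hhalf i₂
          nlinarith
        have hgoal : (m i * (1 + 2 * (m i₂ * (1 - m i₂)))) * (1 - 2 * m i₂)
            ≤ ((4 * m i - 1) * (1 + (f (m i₂) - m i₂) + 2 * (m i₂ * (1 - m i₂))))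
              * (1 - 2 * m i₂) := by
          rw [h4]
          linarith [hb', hbr]
        exact le_of_mul_le_mul_right hgoal hv
      · by_cases hii2 : i = i₂
        · subst hii2
          have hsw : switch i ({i₁, i} : Finset (Fin n)) = {i₁} := by
            rw [switch, if_pos (by simp)]
            rw [Finset.pair_comm i₁ i]
            exact Finset.erase_insert hi₂s
          rw [hsw, Finset.pair_comm i₁ i,
            show ({i, i₁} : Finset (Fin n)) = insert i {i₁} from rfl]
          exact cmp_ge m hpos hhalf hsum hi₂s (le_of_lt hB1)
        · -- third pool
          have hiQ : i ∉ ({i₁, i₂} : Finset (Fin n)) := by simp [hii1, hii2]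
          have hsw : switch i ({i₁, i₂} : Finset (Fin n)) = insert i {i₁, i₂} := by
            rw [switch, if_neg hiQ]
          rw [hsw]
          apply cmp_le m hpos hhalf hsum hiQ
          have hSQ2 : S m ({i₁, i₂} : Finset (Fin n))
              = m i₁ * (1 - m i₁) + m i₂ * (1 - m i₂) := by
            rw [S, Finset.sum_pair hne21.symm]
          have hTQ2 : ∑ j, ER m ({i₁, i₂} : Finset (Fin n)) j
              = (1 + (f (m i₁) - m i₁) + 2 * (m i₁ * (1 - m i₁)))
                + (f (m i₂) - m i₂) + 2 * (m i₂ * (1 - m i₂)) := by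
            rw [Finset.pair_comm i₁ i₂,
              show ({i₂, i₁} : Finset (Fin n)) = insert i₂ {i₁} from rfl,
              sum_ER_insert m hsum hi₂s, hT1val]
          by_cases hx4 : m i ≤ 1/4
          · have hT2pos : 0 < ∑ j, ER m ({i₁, i₂} : Finset (Fin n)) j :=
              T_pos m hpos hhalf i _
            have hS2nn : 0 ≤ S m ({i₁, i₂} : Finset (Fin n)) :=
              S_nonneg m hpos hhalf _
            have h1 := hpos i
            nlinarith [mul_nonneg (by linarith : (0:ℝ) ≤ 1 - 4 * m i) (le_of_lt hT2pos),
              mul_nonneg (le_of_lt h1) hS2nn]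
          · push_neg at hx4
            -- sum bound
            have hsum3 : m i + m i₁ + m i₂ ≤ 1 := by
              have hsub : ∑ j ∈ ({i, i₁, i₂} : Finset (Fin n)), m j ≤ ∑ j, m j :=
                Finset.sum_le_sum_of_subset_of_nonneg (Finset.subset_univ _)
                  (fun j _ _ => le_of_lt (hpos j))
              rw [hsum] at hsub
              have he : ∑ j ∈ ({i, i₁, i₂} : Finset (Fin n)), m j
                  = m i + (m i₁ + m i₂) := by
                rw [Finset.sum_insert (by simp [hii1, hii2]),
                  Finset.sum_pair hne21.symm]
              linarith [he ▸ hsub]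
            rw [hSQ2, hTQ2]
            have huv : (0:ℝ) < (1 - 2 * m i₁) * (1 - 2 * m i₂) := mul_pos hu hv
            apply le_of_mul_le_mul_right _ huv
            have hA2 : ((4 * m i - 1) * ((1 + (f (m i₁) - m i₁) + 2 * (m i₁ * (1 - m i₁)))
                  + (f (m i₂) - m i₂) + 2 * (m i₂ * (1 - m i₂))))
                  * ((1 - 2 * m i₁) * (1 - 2 * m i₂))
                = (4 * m i - 1) * (((m i₁)^3 - 2*(m i₁)^2 - m i₁ + 1) * (1 - 2 * m i₂)
                  + ((m i₂)^3 - 2*(m i₂)^2 - m i₂ + 1) * (1 - 2 * m i₁)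
                  - (1 - 2 * m i₁) * (1 - 2 * m i₂)) := by
              linear_combination ((4 * m i - 1) * (1 - 2 * m i₂)) * hNa
                + ((4 * m i - 1) * (1 - 2 * m i₁)) * hNb
            rw [hA2]
            have he1 : (0:ℝ) ≤ m i₂ - m i := by linarith [hi₂max i hii1]
            have he2 : (0:ℝ) ≤ 1 - m i₁ - m i₂ - m i := by linarith
            have he3 : (0:ℝ) ≤ 4 * m i - 1 := by linarith
            have he4 : (0:ℝ) ≤ m i₁ - m i₂ := by linarith
            linarith [he1, he2, mul_nonneg he1 he2, mul_nonneg he1 he3,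
              mul_nonneg he1 he4, mul_nonneg he2 he2, mul_nonneg he2 he4,
              mul_nonneg he3 he4, mul_nonneg (mul_nonneg he1 he1) he1,
              mul_nonneg (mul_nonneg he1 he1) he3, mul_nonneg (mul_nonneg he1 he1) he4,
              mul_nonneg (mul_nonneg he1 he2) he2, mul_nonneg (mul_nonneg he1 he2) he4,
              mul_nonneg (mul_nonneg he1 he3) he4, mul_nonneg (mul_nonneg he2 he2) he2,
              mul_nonneg (mul_nonneg he2 he2) he4, mul_nonneg (mul_nonneg he2 he3) he4,
              mul_nonneg (mul_nonneg he3 he4) he4,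
              mul_nonneg (mul_nonneg (mul_nonneg he1 he1) he1) he1,
              mul_nonneg (mul_nonneg (mul_nonneg he1 he1) he1) he2,
              mul_nonneg (mul_nonneg (mul_nonneg he1 he1) he1) he3,
              mul_nonneg (mul_nonneg (mul_nonneg he1 he1) he2) he2,
              mul_nonneg (mul_nonneg (mul_nonneg he1 he1) he2) he3,
              mul_nonneg (mul_nonneg (mul_nonneg he1 he1) he3) he3,
              mul_nonneg (mul_nonneg (mul_nonneg he1 he2) he2) he2,
              mul_nonneg (mul_nonneg (mul_nonneg he1 he2) he2) he3,
              mul_nonneg (mul_nonneg (mul_nonneg he1 he2) he3) he3,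
              mul_nonneg (mul_nonneg (mul_nonneg he1 he3) he3) he3,
              mul_nonneg (mul_nonneg (mul_nonneg he2 he2) he2) he3,
              mul_nonneg (mul_nonneg (mul_nonneg he2 he2) he3) he3,
              mul_nonneg (mul_nonneg (mul_nonneg he2 he3) he3) he3,
              mul_nonneg (mul_nonneg (mul_nonneg he3 he3) he4) he4]
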